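/- Let A ∈ ℝ^{m×n}, b ∈ ℝᵐ, and assume that the system A x ≤ b includes, for each j ∈ {1,…,n}, the inequalities x_j ≥ 0 and x_j ≤ 1. Let P := { x ∈ ℝⁿ : A x ≤ b } be nonempty, let P_I := convexHull(P ∩ {0,1}ⁿ) be nonempty, and let c ∈ ℝⁿ. Then sup { cᵀ x : x ∈ P_I } ≤ sup { cᵀ x : x ∈ N₊(P) } ≤ sup { cᵀ x : x ∈ P }, and all three suprema are finite. -/

import Mathlib

open Matrix

/-- Frobenius inner product `A ∙ X := trace(Aᵀ X)`. -/
noncomputable def frob {k : ℕ} (A X : Matrix (Fin k) (Fin k) ℝ) : ℝ :=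
  Matrix.trace (Aᵀ * X)

/-- The Lovász–Schrijver set `M₊(P)` for the system `A x ≤ b` (rows `a_iᵀ x ≤ b_i`):
all positive semidefinite `X ∈ ℝ^{(1+n)×(1+n)}` with `(u_i e_jᵀ) ∙ X ≥ 0`,
`(u_i (e₀ − e_j)ᵀ) ∙ X ≥ 0`, `(e_j (e₀ − e_j)ᵀ) ∙ X = 0` and `(e₀ e₀ᵀ) ∙ X = 1`,
where `u_i := (b_i, −a_i)`. -/
def Mplus {m n : ℕ} (A : Matrix (Fin m) (Fin n) ℝ) (b : Fin m → ℝ) :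
    Set (Matrix (Fin (n + 1)) (Fin (n + 1)) ℝ) :=
  {X | X.PosSemidef ∧
    (∀ (i : Fin m) (j : Fin n),
      0 ≤ frob (Matrix.vecMulVec (Fin.cons (b i) (-(A i))) (Pi.single j.succ 1)) X) ∧
    (∀ (i : Fin m) (j : Fin n),
      0 ≤ frob (Matrix.vecMulVec (Fin.cons (b i) (-(A i)))
        (Pi.single 0 1 - Pi.single j.succ 1)) X) ∧
    (∀ j : Fin n,
      frob (Matrix.vecMulVec (Pi.single j.succ 1)
        (Pi.single 0 1 - Pi.single j.succ 1)) X = 0) ∧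
    frob (Matrix.vecMulVec (Pi.single (0 : Fin (n + 1)) (1 : ℝ))
      (Pi.single (0 : Fin (n + 1)) (1 : ℝ))) X = 1}

/-- The Lovász–Schrijver relaxation
`N₊(P) := { x ∈ ℝⁿ : ∃ X ∈ M₊(P), diag(X) = (1, x) }`. -/
def Nplus {m n : ℕ} (A : Matrix (Fin m) (Fin n) ℝ) (b : Fin m → ℝ) :
    Set (Fin n → ℝ) :=
  {x | ∃ X ∈ Mplus A b, Matrix.diag X = Fin.cons 1 x}

/-!
A 0/1 point `x` of `P` lifts to `M₊(P)` through the rank-one matrix `y yᵀ` with `y = (1, x)`: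
the constraints become products of the nonnegative numbers `b_i - a_iᵀx`, `x_j`, `1 - x_j`, and
`x_j (1 - x_j) = 0`. Hence `P ∩ {0,1}ⁿ ⊆ N₊(P)`, and a linear objective is maximized over a convex
hull on its generators. Conversely, `(e_j (e₀ - e_j)ᵀ) • X = 0` says that column `0` of `X` agrees
with its diagonal `(1, x)`, and the sum of the two constraints for `u_i` and `e_j` reads
`u_iᵀ X e₀ ≥ 0`, i.e. `a_iᵀx ≤ b_i`; so `N₊(P) ⊆ P`. Finiteness comes from `P ⊆ [0,1]ⁿ`.
-/

open Set

lemma csSup_image_convexHull_le {E : Type*} [AddCommGroup E] [Module ℝ E] (f : E →ₗ[ℝ] ℝ)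
    {s t : Set E} (hs : s.Nonempty) (hst : s ⊆ t) (ht : BddAbove (f '' t)) :
    sSup (f '' convexHull ℝ s) ≤ sSup (f '' t) := by
  refine csSup_le (hs.convexHull.image f) ?_
  rintro _ ⟨x, hx, rfl⟩
  obtain ⟨y, hy, hxy⟩ := (f.convexOn convex_univ).exists_ge_of_mem_convexHull (subset_univ s) hx
  exact hxy.trans (le_csSup ht (mem_image_of_mem f (hst hy)))

lemma frob_vecMulVec {k : ℕ} (u v : Fin k → ℝ) (X : Matrix (Fin k) (Fin k) ℝ) :
    frob (vecMulVec u v) X = u ⬝ᵥ X *ᵥ v := by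
  simp only [frob, transpose_vecMulVec, trace, diag_apply, mul_apply, vecMulVec_apply,
    dotProduct, mulVec, Finset.mul_sum]
  rw [Finset.sum_comm]
  exact Finset.sum_congr rfl fun _ _ => Finset.sum_congr rfl fun _ _ => by ring

lemma frob_vecMulVec_vecMulVec {k : ℕ} (u v y : Fin k → ℝ) :
    frob (vecMulVec u v) (vecMulVec y y) = (u ⬝ᵥ y) * (y ⬝ᵥ v) := by
  rw [frob_vecMulVec, vecMulVec_mulVec]
  simp [mul_comm]

section

variable {m n : ℕ} {A : Matrix (Fin m) (Fin n) ℝ} {b : Fin m → ℝ}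

def polyhedron (A : Matrix (Fin m) (Fin n) ℝ) (b : Fin m → ℝ) : Set (Fin n → ℝ) :=
  {x | A *ᵥ x ≤ b}

lemma mem_polyhedron {x : Fin n → ℝ} : x ∈ polyhedron A b ↔ ∀ i, A i ⬝ᵥ x ≤ b i := Iff.rfl

lemma polyhedron_subset_Icc (hlo : ∀ j : Fin n, ∃ i : Fin m, A i = -Pi.single j 1 ∧ b i = 0)
    (hhi : ∀ j : Fin n, ∃ i : Fin m, A i = Pi.single j 1 ∧ b i = 1) :
    polyhedron A b ⊆ Icc 0 1 := by
  intro x hx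
  refine ⟨fun j => ?_, fun j => ?_⟩
  · obtain ⟨i, hA, hb⟩ := hlo j
    simpa [hA, hb, neg_dotProduct, single_one_dotProduct] using mem_polyhedron.mp hx i
  · obtain ⟨i, hA, hb⟩ := hhi j
    simpa [hA, hb, single_one_dotProduct] using mem_polyhedron.mp hx i

lemma cons_neg_dotProduct_cons_one (β : ℝ) (a x : Fin n → ℝ) :
    (Fin.cons β (-a) : Fin (n + 1) → ℝ) ⬝ᵥ Fin.cons 1 x = β - a ⬝ᵥ x := by
  rw [← vecCons, ← vecCons, cons_dotProduct_cons, neg_dotProduct, mul_one, sub_eq_add_neg]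

lemma Mplus.mulVec_single_zero {X : Matrix (Fin (n + 1)) (Fin (n + 1)) ℝ} (hX : X ∈ Mplus A b) :
    X *ᵥ Pi.single 0 1 = X.diag := by
  rw [mulVec_single_one]
  funext t
  refine Fin.cases rfl (fun j => ?_) t
  have h := hX.2.2.2.1 j
  rw [frob_vecMulVec, mulVec_sub, dotProduct_sub, mulVec_single_one, mulVec_single_one,
    single_one_dotProduct, single_one_dotProduct, sub_eq_zero] at h
  exact h

lemma Mplus.dotProduct_mulVec_single_zero_nonneg [NeZero n]
    {X : Matrix (Fin (n + 1)) (Fin (n + 1)) ℝ} (hX : X ∈ Mplus A b) (i : Fin m) :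
    0 ≤ (Fin.cons (b i) (-(A i)) : Fin (n + 1) → ℝ) ⬝ᵥ X *ᵥ Pi.single 0 1 := by
  have h₁ := hX.2.1 i 0
  have h₂ := hX.2.2.1 i 0
  rw [frob_vecMulVec] at h₁ h₂
  rw [mulVec_sub, dotProduct_sub] at h₂
  linarith

lemma Nplus_subset_polyhedron (hP : (polyhedron A b).Nonempty) : Nplus A b ⊆ polyhedron A b := by
  rintro x ⟨X, hX, hdiag⟩
  cases n with
  | zero =>
    -- no constraint of `M₊(P)` involves `A` or `b` here, but `Fin 0 → ℝ` is a single point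
    obtain ⟨y, hy⟩ := hP
    rwa [Subsingleton.elim x y]
  | succ n =>
    refine mem_polyhedron.mpr fun i => ?_
    have h := Mplus.dotProduct_mulVec_single_zero_nonneg hX i
    rw [Mplus.mulVec_single_zero hX, hdiag, cons_neg_dotProduct_cons_one] at h
    linarith

lemma polyhedron_inter_binary_subset_Nplus :
    polyhedron A b ∩ {x | ∀ j, x j = 0 ∨ x j = 1} ⊆ Nplus A b := by
  rintro x ⟨hxP, hx01⟩
  set y : Fin (n + 1) → ℝ := Fin.cons 1 x
  have hy01 : ∀ t, y t * y t = y t :=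
    Fin.cases (by simp [y]) fun j => by rcases hx01 j with h | h <;> simp [y, h]
  have hx : ∀ j, 0 ≤ x j ∧ x j ≤ 1 := fun j => by rcases hx01 j with h | h <;> simp [h]
  refine ⟨vecMulVec y y, ⟨?_, fun i j => ?_, fun i j => ?_, fun j => ?_, ?_⟩, ?_⟩
  · exact posSemidef_vecMulVec_self_star y
  · rw [frob_vecMulVec_vecMulVec, cons_neg_dotProduct_cons_one, dotProduct_single_one]
    exact mul_nonneg (sub_nonneg.mpr (mem_polyhedron.mp hxP i)) (hx j).1
  · rw [frob_vecMulVec_vecMulVec, cons_neg_dotProduct_cons_one, dotProduct_sub,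
      dotProduct_single_one, dotProduct_single_one]
    exact mul_nonneg (sub_nonneg.mpr (mem_polyhedron.mp hxP i)) (sub_nonneg.mpr (hx j).2)
  · rw [frob_vecMulVec_vecMulVec, dotProduct_sub, dotProduct_single_one, dotProduct_single_one,
      single_one_dotProduct, mul_sub, hy01]
    simp [y]
  · simp [frob_vecMulVec_vecMulVec, y]
  · funext t
    exact hy01 t

end

theorem objective_sup_sandwich_general {m n : ℕ} (A : Matrix (Fin m) (Fin n) ℝ) (b : Fin m → ℝ)
    (hlo : ∀ j : Fin n, ∃ i : Fin m, A i = -Pi.single j 1 ∧ b i = 0)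
    (hhi : ∀ j : Fin n, ∃ i : Fin m, A i = Pi.single j 1 ∧ b i = 1)
    (c : Fin n → ℝ)
    (hPI : (convexHull ℝ ({x : Fin n → ℝ | ∀ i, ∑ k, A i k * x k ≤ b i} ∩
      {x | ∀ j, x j = 0 ∨ x j = 1})).Nonempty) :
    sSup ((fun x => ∑ k, c k * x k) ''
        convexHull ℝ ({x : Fin n → ℝ | ∀ i, ∑ k, A i k * x k ≤ b i} ∩
          {x | ∀ j, x j = 0 ∨ x j = 1})) ≤
      sSup ((fun x => ∑ k, c k * x k) '' Nplus A b) ∧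
    sSup ((fun x => ∑ k, c k * x k) '' Nplus A b) ≤
      sSup ((fun x => ∑ k, c k * x k) ''
        {x : Fin n → ℝ | ∀ i, ∑ k, A i k * x k ≤ b i}) ∧
    ((fun x => ∑ k, c k * x k) ''
        convexHull ℝ ({x : Fin n → ℝ | ∀ i, ∑ k, A i k * x k ≤ b i} ∩
          {x | ∀ j, x j = 0 ∨ x j = 1})).Nonempty ∧
    BddAbove ((fun x => ∑ k, c k * x k) ''
        convexHull ℝ ({x : Fin n → ℝ | ∀ i, ∑ k, A i k * x k ≤ b i} ∩
          {x | ∀ j, x j = 0 ∨ x j = 1})) ∧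
    ((fun x => ∑ k, c k * x k) '' Nplus A b).Nonempty ∧
    BddAbove ((fun x => ∑ k, c k * x k) '' Nplus A b) ∧
    ((fun x => ∑ k, c k * x k) ''
        {x : Fin n → ℝ | ∀ i, ∑ k, A i k * x k ≤ b i}).Nonempty ∧
    BddAbove ((fun x => ∑ k, c k * x k) ''
        {x : Fin n → ℝ | ∀ i, ∑ k, A i k * x k ≤ b i}) := by
  set f : (Fin n → ℝ) →ₗ[ℝ] ℝ := dotProductBilin ℝ ℝ c
  have hbdd : ∀ s ⊆ Icc (0 : Fin n → ℝ) 1, BddAbove (f '' s) := fun s hs =>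
    (isCompact_Icc.image f.continuous_of_finiteDimensional).bddAbove.mono (image_mono hs)
  have hbox : polyhedron A b ⊆ Icc 0 1 := polyhedron_subset_Icc hlo hhi
  have hS : (polyhedron A b ∩ {x | ∀ j, x j = 0 ∨ x j = 1}).Nonempty :=
    convexHull_nonempty_iff.mp hPI
  have hSN : polyhedron A b ∩ {x | ∀ j, x j = 0 ∨ x j = 1} ⊆ Nplus A b :=
    polyhedron_inter_binary_subset_Nplus
  have hNP : Nplus A b ⊆ polyhedron A b := Nplus_subset_polyhedron (hS.mono inter_subset_left)
  have hSbox : convexHull ℝ (polyhedron A b ∩ {x | ∀ j, x j = 0 ∨ x j = 1}) ⊆ Icc 0 1 :=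
    convexHull_min (inter_subset_left.trans hbox) (convex_Icc 0 1)
  exact ⟨csSup_image_convexHull_le f hS hSN (hbdd _ (hNP.trans hbox)),
    csSup_le_csSup (hbdd _ hbox) ((hS.mono hSN).image f) (image_mono hNP),
    hPI.image f, hbdd _ hSbox, (hS.mono hSN).image f, hbdd _ (hNP.trans hbox),
    (hS.mono inter_subset_left).image f, hbdd _ hbox⟩

/-- Assume the system `A x ≤ b` includes, for each `j`, the inequalities `x_j ≥ 0` and
`x_j ≤ 1`; let `P := { x : A x ≤ b }` be nonempty and `P_I := convexHull (P ∩ {0,1}ⁿ)` be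
nonempty. Then `sup { cᵀx : x ∈ P_I } ≤ sup { cᵀx : x ∈ N₊(P) } ≤ sup { cᵀx : x ∈ P }`,
and all three suprema are finite (the three sets of objective values are nonempty and
bounded above). -/
theorem objective_sup_sandwich {m n : ℕ} (A : Matrix (Fin m) (Fin n) ℝ) (b : Fin m → ℝ)
    (hlo : ∀ j : Fin n, ∃ i : Fin m, A i = -Pi.single j 1 ∧ b i = 0)
    (hhi : ∀ j : Fin n, ∃ i : Fin m, A i = Pi.single j 1 ∧ b i = 1)
    (c : Fin n → ℝ)
    (hP : {x : Fin n → ℝ | ∀ i, ∑ k, A i k * x k ≤ b i}.Nonempty)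
    (hPI : (convexHull ℝ ({x : Fin n → ℝ | ∀ i, ∑ k, A i k * x k ≤ b i} ∩
      {x | ∀ j, x j = 0 ∨ x j = 1})).Nonempty) :
    sSup ((fun x => ∑ k, c k * x k) ''
        convexHull ℝ ({x : Fin n → ℝ | ∀ i, ∑ k, A i k * x k ≤ b i} ∩
          {x | ∀ j, x j = 0 ∨ x j = 1})) ≤
      sSup ((fun x => ∑ k, c k * x k) '' Nplus A b) ∧
    sSup ((fun x => ∑ k, c k * x k) '' Nplus A b) ≤
      sSup ((fun x => ∑ k, c k * x k) ''
        {x : Fin n → ℝ | ∀ i, ∑ k, A i k * x k ≤ b i}) ∧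
    ((fun x => ∑ k, c k * x k) ''
        convexHull ℝ ({x : Fin n → ℝ | ∀ i, ∑ k, A i k * x k ≤ b i} ∩
          {x | ∀ j, x j = 0 ∨ x j = 1})).Nonempty ∧
    BddAbove ((fun x => ∑ k, c k * x k) ''
        convexHull ℝ ({x : Fin n → ℝ | ∀ i, ∑ k, A i k * x k ≤ b i} ∩
          {x | ∀ j, x j = 0 ∨ x j = 1})) ∧
    ((fun x => ∑ k, c k * x k) '' Nplus A b).Nonempty ∧
    BddAbove ((fun x => ∑ k, c k * x k) '' Nplus A b) ∧
    ((fun x => ∑ k, c k * x k) ''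
        {x : Fin n → ℝ | ∀ i, ∑ k, A i k * x k ≤ b i}).Nonempty ∧
    BddAbove ((fun x => ∑ k, c k * x k) ''
        {x : Fin n → ℝ | ∀ i, ∑ k, A i k * x k ≤ b i}) :=
  objective_sup_sandwich_general A b hlo hhi c hPI
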